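/- (Correctness of the successor-based search.) Assume the probability map P is injective on Boolean sequences, and let S be a nonempty proper subset of the set of all Boolean sequences such that P(B') < P(B) for every B ∈ S and every B' ∉ S. Then the maximum of P over sequences not in S is attained at a one-flip successor of an element of S; precisely, the set T = { Function.update B u (¬ B u) | B ∈ S, u ∉ F(B), Function.update B u (¬ B u) ∉ S } is nonempty, and max_{B' ∉ S} P(B') = max_{B' ∈ T} P(B'), where each such successor satisfies P(Function.update B u (¬ B u)) = V u * P(B). -/

import Mathlib

open scoped Classical
open Finset

/-- The probability of a Boolean sequence `B`:
`P(B) = ∏ j, (if B j then pb j else 1 - pb j)`. -/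
noncomputable def probSeq (l : ℕ) (pb : Fin l → ℝ) (B : Fin l → Bool) : ℝ :=
  ∏ j, (if B j then pb j else 1 - pb j)

/-- The initial sequence `B⁰`, `B⁰ j = (pb j > 1/2)`. -/
noncomputable def initSeq (l : ℕ) (pb : Fin l → ℝ) : Fin l → Bool :=
  fun j => decide (pb j > 1 / 2)

/-- The flip set `F(B) = {j | B j ≠ B⁰ j}`. -/
noncomputable def flipSet (l : ℕ) (pb : Fin l → ℝ) (B : Fin l → Bool) : Finset (Fin l) :=
  Finset.univ.filter (fun j => B j ≠ initSeq l pb j)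

/-- The flip ratio `V u = min (pb u) (1 - pb u) / max (pb u) (1 - pb u)`. -/
noncomputable def flipRatio (l : ℕ) (pb : Fin l → ℝ) (u : Fin l) : ℝ :=
  min (pb u) (1 - pb u) / max (pb u) (1 - pb u)

/-- The set of one-flip successors (at unflipped positions) of elements of `S`
that lie outside `S`. -/
noncomputable def succSet (l : ℕ) (pb : Fin l → ℝ) (S : Finset (Fin l → Bool)) :
    Finset (Fin l → Bool) :=
  Finset.univ.filter (fun C => C ∉ S ∧
    ∃ B ∈ S, ∃ u ∉ flipSet l pb B, C = Function.update B u (!B u))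

/-!
`B⁰` picks the larger of `pb j` and `1 - pb j` in every coordinate, so it maximises `P` and
hence lies in `S`; the same observation gives `P(B[u ↦ ¬B u]) = V u * P(B)` for `u ∉ F(B)`.
Among the maximisers of `P` outside `S` take `C` with the fewest flips. As `C ≠ B⁰`, undoing
one flip `u ∈ F(C)` gives `B` with `P(B) ≥ P(C)` and one flip fewer, so by the choice of `C`
it lies in `S`, and `C` is the successor of `B` at `u ∉ F(B)`.
-/

def bitProb (p : ℝ) (b : Bool) : ℝ :=
  if b then p else 1 - p

section bitProb

variable {p : ℝ}

lemma bitProb_nonneg (hp : p ∈ Set.Icc (0 : ℝ) 1) (b : Bool) : 0 ≤ bitProb p b := by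
  cases b <;> simp only [bitProb, Bool.false_eq_true, if_true, if_false] <;> linarith [hp.1, hp.2]

lemma bitProb_le_max (b : Bool) : bitProb p b ≤ max p (1 - p) := by
  cases b
  · exact le_max_right _ _
  · exact le_max_left _ _

lemma bitProb_decide_gt_half : bitProb p (decide (p > 1 / 2)) = max p (1 - p) := by
  rcases lt_or_ge (1 / 2) p with h | h
  · rw [decide_eq_true h, bitProb, if_pos rfl, max_eq_left (by linarith)]
  · rw [decide_eq_false h.not_gt, bitProb, if_neg Bool.false_ne_true, max_eq_right (by linarith)]

lemma bitProb_not_decide_gt_half : bitProb p (!decide (p > 1 / 2)) = min p (1 - p) := by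
  rcases lt_or_ge (1 / 2) p with h | h
  · rw [decide_eq_true h, Bool.not_true, bitProb, if_neg Bool.false_ne_true,
      min_eq_right (by linarith)]
  · rw [decide_eq_false h.not_gt, Bool.not_false, bitProb, if_pos rfl, min_eq_left (by linarith)]

end bitProb

section probSeq

variable {l : ℕ} {pb : Fin l → ℝ}

lemma bitProb_initSeq (j : Fin l) :
    bitProb (pb j) (initSeq l pb j) = max (pb j) (1 - pb j) :=
  bitProb_decide_gt_half

lemma bitProb_not_initSeq (j : Fin l) :
    bitProb (pb j) (!initSeq l pb j) = min (pb j) (1 - pb j) :=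
  bitProb_not_decide_gt_half

lemma probSeq_le_probSeq_initSeq (hpb : ∀ j, pb j ∈ Set.Icc (0 : ℝ) 1) (B : Fin l → Bool) :
    probSeq l pb B ≤ probSeq l pb (initSeq l pb) :=
  prod_le_prod (fun j _ => bitProb_nonneg (hpb j) _)
    (fun j _ => (bitProb_le_max _).trans_eq (bitProb_initSeq j).symm)

lemma probSeq_eq_mul_prod_erase (B : Fin l → Bool) (u : Fin l) :
    probSeq l pb B = bitProb (pb u) (B u) * ∏ j ∈ univ.erase u, bitProb (pb j) (B j) :=
  (mul_prod_erase univ _ (mem_univ u)).symm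

lemma probSeq_update (B : Fin l → Bool) (u : Fin l) (b : Bool) :
    probSeq l pb (Function.update B u b) =
      bitProb (pb u) b * ∏ j ∈ univ.erase u, bitProb (pb j) (B j) := by
  rw [probSeq_eq_mul_prod_erase _ u, Function.update_self]
  congr 1
  exact prod_congr rfl fun j hj => by rw [Function.update_of_ne (ne_of_mem_erase hj)]

lemma probSeq_update_not_of_notMem_flipSet {B : Fin l → Bool} {u : Fin l}
    (hu : u ∉ flipSet l pb B) :
    probSeq l pb (Function.update B u (!B u)) = flipRatio l pb u * probSeq l pb B := by
  have hBu : B u = initSeq l pb u := by simpa [flipSet] using hu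
  have hmax : 0 < max (pb u) (1 - pb u) := by
    rw [lt_max_iff]; by_contra! h; linarith [h.1, h.2]
  rw [probSeq_update, probSeq_eq_mul_prod_erase B u, hBu, bitProb_not_initSeq,
    bitProb_initSeq, flipRatio]
  field_simp

lemma probSeq_le_probSeq_update_initSeq (hpb : ∀ j, pb j ∈ Set.Icc (0 : ℝ) 1)
    (C : Fin l → Bool) (u : Fin l) :
    probSeq l pb C ≤ probSeq l pb (Function.update C u (initSeq l pb u)) := by
  rw [probSeq_update, probSeq_eq_mul_prod_erase C u, bitProb_initSeq]
  exact mul_le_mul_of_nonneg_right (bitProb_le_max _)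
    (prod_nonneg fun j _ => bitProb_nonneg (hpb j) _)

lemma flipSet_update_initSeq (C : Fin l → Bool) (u : Fin l) :
    flipSet l pb (Function.update C u (initSeq l pb u)) = (flipSet l pb C).erase u := by
  ext j
  by_cases h : j = u
  · subst h; simp [flipSet]
  · simp [flipSet, h]

lemma initSeq_mem {S : Finset (Fin l → Bool)} (hpb : ∀ j, pb j ∈ Set.Icc (0 : ℝ) 1)
    (hne : S.Nonempty) (htop : ∀ B ∈ S, ∀ B' ∉ S, probSeq l pb B' < probSeq l pb B) :
    initSeq l pb ∈ S := by
  obtain ⟨B, hB⟩ := hne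
  by_contra h
  exact (htop B hB _ h).not_ge (probSeq_le_probSeq_initSeq hpb B)

lemma mem_succSet_of_forall_le_of_card_flipSet_le {S : Finset (Fin l → Bool)}
    (hpb : ∀ j, pb j ∈ Set.Icc (0 : ℝ) 1) (hinit : initSeq l pb ∈ S)
    {C : Fin l → Bool} (hC : C ∉ S) (hmax : ∀ D ∉ S, probSeq l pb D ≤ probSeq l pb C)
    (hmin : ∀ D ∉ S, probSeq l pb D = probSeq l pb C →
      #(flipSet l pb C) ≤ #(flipSet l pb D)) :
    C ∈ succSet l pb S := by
  obtain ⟨u, hu⟩ := Function.ne_iff.mp (ne_of_mem_of_not_mem hinit hC).symm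
  set B := Function.update C u (initSeq l pb u)
  have hBu : B u = initSeq l pb u := Function.update_self ..
  have hB : B ∈ S := by
    by_contra hB
    have hCB := hmin B hB ((hmax B hB).antisymm (probSeq_le_probSeq_update_initSeq hpb C u))
    rw [flipSet_update_initSeq] at hCB
    exact hCB.not_gt (card_erase_lt_of_mem (by simpa [flipSet] using hu))
  have hCB : C = Function.update B u (!B u) := by
    rw [hBu, Function.update_idem, ← Bool.eq_not_of_ne hu, Function.update_eq_self]
  exact mem_filter.mpr ⟨mem_univ C, hC, B, hB, u, by simp [flipSet, hBu], hCB⟩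

lemma exists_mem_succSet_forall_le {S : Finset (Fin l → Bool)}
    (hpb : ∀ j, pb j ∈ Set.Icc (0 : ℝ) 1) (hinit : initSeq l pb ∈ S) (hSc : Sᶜ.Nonempty) :
    ∃ C ∈ succSet l pb S, ∀ D ∉ S, probSeq l pb D ≤ probSeq l pb C := by
  obtain ⟨C₀, hC₀, hC₀max⟩ := exists_max_image Sᶜ (probSeq l pb) hSc
  obtain ⟨C, hC, hCmin⟩ := exists_min_image
    ({D ∈ Sᶜ | probSeq l pb D = probSeq l pb C₀}) (fun D => #(flipSet l pb D))
    ⟨C₀, mem_filter.mpr ⟨hC₀, rfl⟩⟩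
  obtain ⟨hCS, hCeq⟩ := mem_filter.mp hC
  have hmax : ∀ D ∉ S, probSeq l pb D ≤ probSeq l pb C :=
    fun D hD => hCeq ▸ hC₀max D (mem_compl.mpr hD)
  refine ⟨C, mem_succSet_of_forall_le_of_card_flipSet_le hpb hinit (mem_compl.mp hCS) hmax
    fun D hD hDC => hCmin D (mem_filter.mpr ⟨mem_compl.mpr hD, hDC.trans hCeq⟩), hmax⟩

end probSeq

/-- correctness of the successor-based search: the maximum of `P` over
sequences not in `S` is attained on the set of one-flip successors of elements of `S`,
and each such successor's probability is `V u * P(B)`. -/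
theorem succ_search_correct (l : ℕ) (pb : Fin l → ℝ)
    (hpb : ∀ j, 0 < pb j ∧ pb j < 1)
    (S : Finset (Fin l → Bool)) (hne : S.Nonempty) (hproper : S ≠ Finset.univ)
    (htop : ∀ B ∈ S, ∀ B' ∉ S, probSeq l pb B' < probSeq l pb B) :
    ∃ hT : (succSet l pb S).Nonempty,
      Sᶜ.sup'
          (by simpa [Finset.compl_eq_empty_iff, Finset.nonempty_iff_ne_empty] using hproper)
          (probSeq l pb) =
        (succSet l pb S).sup' hT (probSeq l pb) ∧
      ∀ B ∈ S, ∀ u ∉ flipSet l pb B,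
        probSeq l pb (Function.update B u (!B u)) = flipRatio l pb u * probSeq l pb B := by
  have hSc : Sᶜ.Nonempty := by
    simpa [Finset.compl_eq_empty_iff, Finset.nonempty_iff_ne_empty] using hproper
  have hpb' : ∀ j, pb j ∈ Set.Icc (0 : ℝ) 1 := fun j => ⟨(hpb j).1.le, (hpb j).2.le⟩
  obtain ⟨C, hCT, hCmax⟩ := exists_mem_succSet_forall_le hpb' (initSeq_mem hpb' hne htop) hSc
  refine ⟨⟨C, hCT⟩, le_antisymm ?_ ?_, fun B _ u hu => probSeq_update_not_of_notMem_flipSet hu⟩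
  · exact sup'_le _ _ fun D hD => (hCmax D (mem_compl.mp hD)).trans (le_sup' _ hCT)
  · exact sup'_le _ _ fun D hD => le_sup' _ (mem_compl.mpr (mem_filter.mp hD).2.1)
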